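/- arXiv:1008.2108 — 4 statements merged into one kernel-verified Lean document; each statement's English description precedes it below -/
import Mathlib

section
/- Let A be an action set with partition {A^r, A^l, A^bi} where A^bi = ∅. Let p_r, q_r, p_l, q_l be closed BCCSP processes with I(p_r) ⊆ A^r, I(q_r) ⊆ A^r, I(p_l) ⊆ A^l and I(q_l) ⊆ A^l. Then p_r + p_l ≲_CC q_r + q_l if and only if p_r ≲_CC q_r and p_l ≲_CC q_l. -/
inductive Proc (A : Type) : Type
  | nil : Proc A
  | pre : A → Proc A → Proc A
  | add : Proc A → Proc A → Proc A

inductive Step {A : Type} : Proc A → A → Proc A → Prop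
  | pre (a : A) (p : Proc A) : Step (.pre a p) a p
  | addL {p : Proc A} {a : A} {p' : Proc A} (q : Proc A) :
      Step p a p' → Step (.add p q) a p'
  | addR {q : Proc A} {a : A} {q' : Proc A} (p : Proc A) :
      Step q a q' → Step (.add p q) a q'

/-- `initials p` is the set `I(p)` of actions that `p` can immediately perform. -/
def initials {A : Type} (p : Proc A) : Set A := {a | ∃ p', Step p a p'}

/-- `{Ar, Al, Abi}` is a partition of the action set `A` (cells may be empty). -/
def IsPartition {A : Type} (Ar Al Abi : Set A) : Prop :=
  (Ar ∪ Al ∪ Abi = Set.univ) ∧ Disjoint Ar Al ∧ Disjoint Ar Abi ∧ Disjoint Al Abi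

/-- Covariant-contravariant simulation w.r.t. covariant actions `Ar`,
contravariant actions `Al` and bivariant actions `Abi`. -/
def IsCCSim {A : Type} (Ar Al Abi : Set A) (S : Proc A → Proc A → Prop) : Prop :=
  ∀ p q, S p q →
    (∀ a ∈ Ar ∪ Abi, ∀ p', Step p a p' → ∃ q', Step q a q' ∧ S p' q') ∧
    (∀ a ∈ Al ∪ Abi, ∀ q', Step q a q' → ∃ p', Step p a p' ∧ S p' q')

/-- The covariant-contravariant simulation preorder `p ≲_CC q`. -/
def ccLe {A : Type} (Ar Al Abi : Set A) (p q : Proc A) : Prop :=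
  ∃ S, IsCCSim Ar Al Abi S ∧ S p q

/-- Covariant-contravariant simulation equivalence `p ≡_CC q`. -/
def ccEq {A : Type} (Ar Al Abi : Set A) (p q : Proc A) : Prop :=
  ccLe Ar Al Abi p q ∧ ccLe Ar Al Abi q p

/-- Conformance simulation. -/
def IsConfSim {A : Type} (R : Proc A → Proc A → Prop) : Prop :=
  ∀ p q, R p q →
    initials p ⊆ initials q ∧
    (∀ a q', Step q a q' → a ∈ initials p → ∃ p', Step p a p' ∧ R p' q')

/-- The conformance simulation preorder `p ≲_CS q`. -/
def csLe {A : Type} (p q : Proc A) : Prop := ∃ R, IsConfSim R ∧ R p q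

/-- Conformance simulation equivalence `p ≡_CS q`. -/
def csEq {A : Type} (p q : Proc A) : Prop := csLe p q ∧ csLe q p

/-- The conformance precongruence `p ⊑_CS q`. -/
def csPre {A : Type} (p q : Proc A) : Prop := csLe p q ∧ initials q ⊆ initials p

/-- Plain simulation. -/
def IsSim {A : Type} (S : Proc A → Proc A → Prop) : Prop :=
  ∀ p q, S p q → ∀ a p', Step p a p' → ∃ q', Step q a q' ∧ S p' q'

/-- The plain simulation preorder `p ≲_S q`. -/
def simLe {A : Type} (p q : Proc A) : Prop := ∃ S, IsSim S ∧ S p q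

/-- Ready simulation. -/
def IsRSim {A : Type} (S : Proc A → Proc A → Prop) : Prop :=
  ∀ p q, S p q → initials p = initials q ∧
    (∀ a p', Step p a p' → ∃ q', Step q a q' ∧ S p' q')

/-- The ready simulation preorder `p ≲_RS q`. -/
def rsLe {A : Type} (p q : Proc A) : Prop := ∃ S, IsRSim S ∧ S p q

/-- Ready conformance simulation: a conformance simulation that additionally
guarantees `I(q) ⊆ I(p)` for all related pairs. -/
def IsRCSim {A : Type} (R : Proc A → Proc A → Prop) : Prop :=
  IsConfSim R ∧ ∀ p q, R p q → initials q ⊆ initials p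

/-- The ready conformance simulation preorder `p ≲_RCS q`. -/
def rcsLe {A : Type} (p q : Proc A) : Prop := ∃ R, IsRCSim R ∧ R p q

/-- Open BCCSP terms (with variables indexed by `ℕ`). -/
inductive Term (A : Type) : Type
  | var : ℕ → Term A
  | nil : Term A
  | pre : A → Term A → Term A
  | add : Term A → Term A → Term A

/-- Closed substitution applied to an open term. -/
def Term.subst {A : Type} (σ : ℕ → Proc A) : Term A → Proc A
  | .var n => σ n
  | .nil => .nil
  | .pre a t => .pre a (t.subst σ)
  | .add s t => .add (s.subst σ) (t.subst σ)

/-- View a closed process as an (open) term. -/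
def Proc.toTerm {A : Type} : Proc A → Term A
  | .nil => .nil
  | .pre a p => .pre a p.toTerm
  | .add p q => .add p.toTerm q.toTerm

/-- Inequational derivability (between closed processes) from a set `E` of
inequations between open terms: the least relation containing all substitution
instances of `E` and closed under reflexivity, transitivity and the congruence
rules for prefixing and `+`. -/
inductive DerivLe {A : Type} (E : Set (Term A × Term A)) : Proc A → Proc A → Prop
  | ax (l r : Term A) (σ : ℕ → Proc A) : (l, r) ∈ E → DerivLe E (l.subst σ) (r.subst σ)
  | refl (p : Proc A) : DerivLe E p p
  | trans {p q r : Proc A} : DerivLe E p q → DerivLe E q r → DerivLe E p r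
  | pre (a : A) {p q : Proc A} : DerivLe E p q → DerivLe E (.pre a p) (.pre a q)
  | add {p q r s : Proc A} : DerivLe E p q → DerivLe E r s → DerivLe E (.add p r) (.add q s)

/-- Equational derivability (between closed processes) from a set `E` of
equations between open terms. -/
inductive DerivEq {A : Type} (E : Set (Term A × Term A)) : Proc A → Proc A → Prop
  | ax (l r : Term A) (σ : ℕ → Proc A) : (l, r) ∈ E → DerivEq E (l.subst σ) (r.subst σ)
  | refl (p : Proc A) : DerivEq E p p
  | symm {p q : Proc A} : DerivEq E p q → DerivEq E q p
  | trans {p q r : Proc A} : DerivEq E p q → DerivEq E q r → DerivEq E p r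
  | pre (a : A) {p q : Proc A} : DerivEq E p q → DerivEq E (.pre a p) (.pre a q)
  | add {p q r s : Proc A} : DerivEq E p q → DerivEq E r s → DerivEq E (.add p r) (.add q s)

/-- Substitution of (possibly open) terms for variables. -/
def Term.substT {A : Type} (σ : ℕ → Term A) : Term A → Term A
  | .var n => σ n
  | .nil => .nil
  | .pre a t => .pre a (t.substT σ)
  | .add s t => .add (s.substT σ) (t.substT σ)

/-- Equational derivability between open terms from a set `E` of equations. -/
inductive TDerivEq {A : Type} (E : Set (Term A × Term A)) : Term A → Term A → Prop
  | ax (l r : Term A) (σ : ℕ → Term A) : (l, r) ∈ E → TDerivEq E (l.substT σ) (r.substT σ)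
  | refl (t : Term A) : TDerivEq E t t
  | symm {s t : Term A} : TDerivEq E s t → TDerivEq E t s
  | trans {s t u : Term A} : TDerivEq E s t → TDerivEq E t u → TDerivEq E s u
  | pre (a : A) {s t : Term A} : TDerivEq E s t → TDerivEq E (.pre a s) (.pre a t)
  | add {s t u v : Term A} : TDerivEq E s t → TDerivEq E u v → TDerivEq E (.add s u) (.add t v)

/-- The bisimulation axioms B1–B4, as equations. -/
def BEqns (A : Type) : Set (Term A × Term A) :=
  { (.add (.var 0) (.var 1), .add (.var 1) (.var 0)),
    (.add (.add (.var 0) (.var 1)) (.var 2), .add (.var 0) (.add (.var 1) (.var 2))),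
    (.add (.var 0) (.var 0), .var 0),
    (.add (.var 0) .nil, .var 0) }

/-- The bisimulation axioms B1–B4, each used as two inequations. -/
def BIneqs (A : Type) : Set (Term A × Term A) := BEqns A ∪ Prod.swap '' BEqns A

/-!
`≲_CC` is itself a covariant-contravariant simulation, so `p ≲_CC q` holds exactly when the
one-step transfer conditions hold with `≲_CC` relating the residuals. In a sum whose summands have
pairwise disjoint initial actions, a step of one summand on the left can only be answered by the
corresponding summand on the right; moreover the covariant clause says nothing about processes
whose initial actions are all contravariant, and vice versa.
-/

section CCSimulation

variable {A : Type}

def Simulates (B : Set A) (R : Proc A → Proc A → Prop) (p q : Proc A) : Prop :=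
  ∀ a ∈ B, ∀ p', Step p a p' → ∃ q', Step q a q' ∧ R p' q'

def CCStep (Ar Al Abi : Set A) (R : Proc A → Proc A → Prop) (p q : Proc A) : Prop :=
  Simulates (Ar ∪ Abi) R p q ∧ Simulates (Al ∪ Abi) (flip R) q p

theorem step_add_iff {p q r : Proc A} {a : A} :
    Step (.add p q) a r ↔ Step p a r ∨ Step q a r := by
  constructor
  · rintro (_ | ⟨_, h⟩ | ⟨_, h⟩)
    exacts [.inl h, .inr h]
  · rintro (h | h)
    exacts [.addL q h, .addR p h]

theorem Simulates.mono {B : Set A} {R R' : Proc A → Proc A → Prop} {p q : Proc A}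
    (hR : ∀ x y, R x y → R' x y) (h : Simulates B R p q) : Simulates B R' p q :=
  fun a ha p' hp => (h a ha p' hp).imp fun q' ⟨hq, hpq⟩ => ⟨hq, hR p' q' hpq⟩

theorem CCStep.mono {Ar Al Abi : Set A} {R R' : Proc A → Proc A → Prop} {p q : Proc A}
    (hR : ∀ x y, R x y → R' x y) (h : CCStep Ar Al Abi R p q) : CCStep Ar Al Abi R' p q :=
  ⟨h.1.mono hR, h.2.mono fun x y => hR y x⟩

theorem simulates_of_disjoint {B : Set A} {R : Proc A → Proc A → Prop} {p q : Proc A}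
    (h : Disjoint (initials p) B) : Simulates B R p q :=
  fun _ ha p' hp => absurd ha (Set.disjoint_left.1 h ⟨p', hp⟩)

theorem simulates_add_iff {B : Set A} {R : Proc A → Proc A → Prop} {p₁ p₂ q₁ q₂ : Proc A}
    (h₁₂ : Disjoint (initials p₁) (initials q₂)) (h₂₁ : Disjoint (initials p₂) (initials q₁)) :
    Simulates B R (.add p₁ p₂) (.add q₁ q₂) ↔ Simulates B R p₁ q₁ ∧ Simulates B R p₂ q₂ := by
  constructor
  · intro h
    constructor
    · intro a ha p' hp
      obtain ⟨q', hq, hpq⟩ := h a ha p' (.addL p₂ hp)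
      refine ⟨q', (step_add_iff.1 hq).resolve_right fun hq => ?_, hpq⟩
      exact Set.disjoint_left.1 h₁₂ ⟨p', hp⟩ ⟨q', hq⟩
    · intro a ha p' hp
      obtain ⟨q', hq, hpq⟩ := h a ha p' (.addR p₁ hp)
      refine ⟨q', (step_add_iff.1 hq).resolve_left fun hq => ?_, hpq⟩
      exact Set.disjoint_left.1 h₂₁ ⟨p', hp⟩ ⟨q', hq⟩
  · rintro ⟨h₁, h₂⟩ a ha p' hp
    rcases step_add_iff.1 hp with hp | hp
    · obtain ⟨q', hq, hpq⟩ := h₁ a ha p' hp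
      exact ⟨q', .addL q₂ hq, hpq⟩
    · obtain ⟨q', hq, hpq⟩ := h₂ a ha p' hp
      exact ⟨q', .addR q₁ hq, hpq⟩

variable {Ar Al Abi : Set A}

theorem isCCSim_iff {S : Proc A → Proc A → Prop} :
    IsCCSim Ar Al Abi S ↔ ∀ p q, S p q → CCStep Ar Al Abi S p q :=
  Iff.rfl

theorem isCCSim_ccLe : IsCCSim Ar Al Abi (ccLe Ar Al Abi) :=
  isCCSim_iff.2 fun _ _ ⟨S, hS, hpq⟩ => (isCCSim_iff.1 hS _ _ hpq).mono fun _ _ h => ⟨S, hS, h⟩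

theorem ccLe_iff_ccStep {p q : Proc A} :
    ccLe Ar Al Abi p q ↔ CCStep Ar Al Abi (ccLe Ar Al Abi) p q := by
  refine ⟨isCCSim_iff.1 isCCSim_ccLe p q, fun h => ?_⟩
  refine ⟨fun x y => ccLe Ar Al Abi x y ∨ (x = p ∧ y = q), ?_, .inr ⟨rfl, rfl⟩⟩
  rintro x y (hxy | ⟨rfl, rfl⟩)
  · exact (isCCSim_iff.1 isCCSim_ccLe x y hxy).mono fun _ _ => .inl
  · exact h.mono fun _ _ => .inl

theorem ccStep_add_iff {R : Proc A → Proc A → Prop} {pr qr pl ql : Proc A}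
    (hrl : Disjoint Ar Al) (hrbi : Disjoint Ar Abi) (hlbi : Disjoint Al Abi)
    (hpr : initials pr ⊆ Ar) (hqr : initials qr ⊆ Ar)
    (hpl : initials pl ⊆ Al) (hql : initials ql ⊆ Al) :
    CCStep Ar Al Abi R (.add pr pl) (.add qr ql) ↔
      CCStep Ar Al Abi R pr qr ∧ CCStep Ar Al Abi R pl ql := by
  have hr : Disjoint Ar (Al ∪ Abi) := Set.disjoint_union_right.2 ⟨hrl, hrbi⟩
  have hl : Disjoint Al (Ar ∪ Abi) := Set.disjoint_union_right.2 ⟨hrl.symm, hlbi⟩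
  unfold CCStep
  rw [simulates_add_iff (hrl.mono hpr hql) (hrl.symm.mono hpl hqr),
    simulates_add_iff (hrl.mono hqr hpl) (hrl.symm.mono hql hpr),
    iff_true_intro (simulates_of_disjoint (hl.mono_left hpl)),
    iff_true_intro (simulates_of_disjoint (hr.mono_left hqr))]

end CCSimulation

theorem cc_le_decompose_general {A : Type} (Ar Al Abi : Set A)
    (hpart : IsPartition Ar Al Abi)
    (pr qr pl ql : Proc A)
    (hpr : initials pr ⊆ Ar) (hqr : initials qr ⊆ Ar)
    (hpl : initials pl ⊆ Al) (hql : initials ql ⊆ Al) :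
    ccLe Ar Al Abi (.add pr pl) (.add qr ql) ↔
      ccLe Ar Al Abi pr qr ∧ ccLe Ar Al Abi pl ql := by
  obtain ⟨-, hrl, hrbi, hlbi⟩ := hpart
  rw [ccLe_iff_ccStep, ccLe_iff_ccStep, ccLe_iff_ccStep]
  exact ccStep_add_iff hrl hrbi hlbi hpr hqr hpl hql

/-- When `A^bi = ∅`, for processes decomposed into covariant and contravariant
parts, `p_r + p_l ≲_CC q_r + q_l` iff `p_r ≲_CC q_r` and `p_l ≲_CC q_l`. -/
theorem cc_le_decompose {A : Type} (Ar Al Abi : Set A)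
    (hpart : IsPartition Ar Al Abi) (hbi : Abi = ∅)
    (pr qr pl ql : Proc A)
    (hpr : initials pr ⊆ Ar) (hqr : initials qr ⊆ Ar)
    (hpl : initials pl ⊆ Al) (hql : initials ql ⊆ Al) :
    ccLe Ar Al Abi (.add pr pl) (.add qr ql) ↔
      ccLe Ar Al Abi pr qr ∧ ccLe Ar Al Abi pl ql :=
  cc_le_decompose_general Ar Al Abi hpart pr qr pl ql hpr hqr hpl hql
end

section
/- The conformance simulation preorder ≲_CS is not preserved by +: for pairwise distinct actions a, b, c ∈ A, one has 0 ≲_CS a.b.0 and a.c.0 ≲_CS a.c.0, but not a.c.0 ≲_CS a.b.0 + a.c.0. -/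
theorem Step.not_nil {A : Type} {a : A} {p : Proc A} : ¬ Step .nil a p := nofun

theorem Step.pre_iff {A : Type} {a x : A} {p p' : Proc A} :
    Step (.pre a p) x p' ↔ x = a ∧ p' = p :=
  ⟨by rintro ⟨⟩; exact ⟨rfl, rfl⟩, by rintro ⟨rfl, rfl⟩; exact .pre _ _⟩

theorem initials_pre {A : Type} (a : A) (p : Proc A) : initials (.pre a p) = {a} := by
  ext x
  simp [initials, Step.pre_iff]

theorem isConfSim_eq {A : Type} : IsConfSim (@Eq (Proc A)) := by
  rintro p _ rfl
  exact ⟨subset_rfl, fun _ p' hp' _ => ⟨p', hp', rfl⟩⟩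

theorem csLe_refl {A : Type} (p : Proc A) : csLe p p := ⟨Eq, isConfSim_eq, rfl⟩

theorem isConfSim_nil_left {A : Type} : IsConfSim fun p _ : Proc A => p = .nil := by
  rintro p q rfl
  exact ⟨fun _ ⟨_, h⟩ => h.not_nil.elim, fun _ _ _ ⟨_, h⟩ => h.not_nil.elim⟩

theorem nil_csLe {A : Type} (q : Proc A) : csLe .nil q := ⟨_, isConfSim_nil_left, rfl⟩

namespace csLe

variable {A : Type} {p q : Proc A}

theorem initials_subset (h : csLe p q) : initials p ⊆ initials q :=
  let ⟨_, hR, hpq⟩ := h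
  (hR _ _ hpq).1

theorem exists_step (h : csLe p q) {a : A} {q' : Proc A} (hq : Step q a q')
    (ha : a ∈ initials p) : ∃ p', Step p a p' ∧ csLe p' q' :=
  let ⟨R, hR, hpq⟩ := h
  let ⟨p', hp, hR'⟩ := (hR _ _ hpq).2 a q' hq ha
  ⟨p', hp, R, hR, hR'⟩

theorem of_pre_of_step {a : A} {q' : Proc A} (h : csLe (.pre a p) q) (hq : Step q a q') :
    csLe p q' := by
  obtain ⟨p', hp, hle⟩ := h.exists_step hq ⟨p, .pre a p⟩
  rwa [(Step.pre_iff.mp hp).2] at hle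

end csLe

theorem not_csLe_pre_pre {A : Type} {b c : A} (hbc : b ≠ c) (p q : Proc A) :
    ¬ csLe (.pre c p) (.pre b q) := fun h => by
  have hsub := h.initials_subset
  rw [initials_pre, initials_pre, Set.singleton_subset_singleton] at hsub
  exact hbc hsub.symm

theorem csLe_not_preserved_by_add_general {A : Type} (a b c : A)
    (hbc : b ≠ c) :
    csLe (Proc.nil : Proc A) (.pre a (.pre b .nil)) ∧
    csLe (Proc.pre a (.pre c .nil)) (.pre a (.pre c .nil)) ∧
    ¬ csLe (Proc.pre a (.pre c .nil))
        (.add (.pre a (.pre b .nil)) (.pre a (.pre c .nil))) :=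
  ⟨nil_csLe _, csLe_refl _, fun h =>
    -- `a.c.0` must answer the left `a`-step, after which `c.0` would have to be simulated by `b.0`
    not_csLe_pre_pre hbc _ _ (h.of_pre_of_step (.addL _ (.pre a _)))⟩

/-- `≲_CS` is not preserved by `+`: `0 ≲_CS a.b.0` and `a.c.0 ≲_CS a.c.0`,
but not `a.c.0 ≲_CS a.b.0 + a.c.0`. -/
theorem csLe_not_preserved_by_add {A : Type} (a b c : A)
    (hab : a ≠ b) (hac : a ≠ c) (hbc : b ≠ c) :
    csLe (Proc.nil : Proc A) (.pre a (.pre b .nil)) ∧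
    csLe (Proc.pre a (.pre c .nil)) (.pre a (.pre c .nil)) ∧
    ¬ csLe (Proc.pre a (.pre c .nil))
        (.add (.pre a (.pre b .nil)) (.pre a (.pre c .nil))) :=
  csLe_not_preserved_by_add_general a b c hbc
end

section
/- Let A be an action set with partition {A^r, A^l, A^bi} such that A^bi ≠ ∅ and A^r ∪ A^l ≠ ∅. Then covariant-contravariant simulation equivalence is not finitely axiomatizable: for every finite set E of equations between open BCCSP terms that is sound for ≡_CC (i.e., for every equation l = r in E and every closed substitution σ, σ(l) ≡_CC σ(r)), there exist closed BCCSP processes p, q with p ≡_CC q such that the equation p = q is not equationally derivable from E. -/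
/-!
Let `a ∈ A^r` (the case `a ∈ A^l` is symmetric) and `b ∈ A^bi`. The processes `a.bⁿ.a.0` and
`a.bⁿ.a.0 + a.bⁿ.0` are `≡_CC`, since the extra summand only offers the covariant `a`, and
`bⁿ.0 ≲_CC bⁿ.a.0`. Call a process an `n`-ladder if, as far as `b`-paths, bivariant actions and a
final offer of `a` are concerned, it behaves like `bⁿ.a.0`. When `n` exceeds the depth of every
equation of a sound `E`, the property "every `a`-derivative is an `n`-ladder" is invariant under
derivability from `E`; `a.bⁿ.a.0` has it and `a.bⁿ.a.0 + a.bⁿ.0` does not.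

Invariance for an instance `σ(u) ≲_CC σ(t)` of a sound axiom: a top-level variable `x` of `u` must be
one of `t`, or instantiating `x` by `a.bᴺ.0` with `N` large gives `σ(u)` an `a`-derivative that no
`a`-derivative of `σ(t)` can simulate. For a summand `a.w` of `u`, the bivariant part of the ladder
shape transfers from the matching derivative of `σ(t)`. The final `a` is the delicate point: a
`b`-path of length `n` in `σ(w)` must leave the syntax of `w` through a variable `x`, and
instantiating `x` by `b.0` instead creates a dead end that forces the matching summand `a.v` of `t`
to expose `x` after at most `n` syntactic `b`-prefixes, so that the same path runs through `σ(v)`.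
-/

variable {A : Type} {Ar Al Abi : Set A}

theorem mem_initials_pre {a c : A} {p : Proc A} : c ∈ initials (.pre a p) ↔ c = a :=
  ⟨fun ⟨_, h⟩ => by cases h; rfl, by rintro rfl; exact ⟨p, .pre c p⟩⟩

theorem notMem_initials_nil (c : A) : c ∉ initials (.nil : Proc A) :=
  fun ⟨_, h⟩ => nomatch h

namespace ccLe

variable {p q r s : Proc A} {c : A}

theorem step_cov (h : ccLe Ar Al Abi p q) (hc : c ∈ Ar ∪ Abi) {p' : Proc A} (hs : Step p c p') :
    ∃ q', Step q c q' ∧ ccLe Ar Al Abi p' q' :=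
  let ⟨S, hS, hpq⟩ := h
  ((hS p q hpq).1 c hc p' hs).imp fun _ h => ⟨h.1, S, hS, h.2⟩

theorem step_contra (h : ccLe Ar Al Abi p q) (hc : c ∈ Al ∪ Abi) {q' : Proc A}
    (hs : Step q c q') : ∃ p', Step p c p' ∧ ccLe Ar Al Abi p' q' :=
  let ⟨S, hS, hpq⟩ := h
  ((hS p q hpq).2 c hc q' hs).imp fun _ h => ⟨h.1, S, hS, h.2⟩

theorem mem_initials_cov (h : ccLe Ar Al Abi p q) (hc : c ∈ Ar ∪ Abi) :
    c ∈ initials p → c ∈ initials q :=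
  fun ⟨_, hs⟩ => (h.step_cov hc hs).imp fun _ h => h.1

theorem mem_initials_contra (h : ccLe Ar Al Abi p q) (hc : c ∈ Al ∪ Abi) :
    c ∈ initials q → c ∈ initials p :=
  fun ⟨_, hs⟩ => (h.step_contra hc hs).imp fun _ h => h.1

theorem of_steps
    (hcov : ∀ c ∈ Ar ∪ Abi, ∀ p', Step p c p' → ∃ q', Step q c q' ∧ ccLe Ar Al Abi p' q')
    (hcontra : ∀ c ∈ Al ∪ Abi, ∀ q', Step q c q' → ∃ p', Step p c p' ∧ ccLe Ar Al Abi p' q') :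
    ccLe Ar Al Abi p q := by
  refine ⟨fun u v => (u = p ∧ v = q) ∨ ccLe Ar Al Abi u v, ?_, .inl ⟨rfl, rfl⟩⟩
  rintro u v (⟨rfl, rfl⟩ | huv)
  · exact ⟨fun c hc _ hs => (hcov c hc _ hs).imp fun _ h => ⟨h.1, .inr h.2⟩,
      fun c hc _ hs => (hcontra c hc _ hs).imp fun _ h => ⟨h.1, .inr h.2⟩⟩
  · exact ⟨fun _ hc _ hs => (huv.step_cov hc hs).imp fun _ h => ⟨h.1, .inr h.2⟩,
      fun _ hc _ hs => (huv.step_contra hc hs).imp fun _ h => ⟨h.1, .inr h.2⟩⟩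

theorem refl (p : Proc A) : ccLe Ar Al Abi p p := by
  refine ⟨Eq, ?_, rfl⟩
  rintro u _ rfl
  exact ⟨fun _ _ u' hs => ⟨u', hs, rfl⟩, fun _ _ u' hs => ⟨u', hs, rfl⟩⟩

theorem trans (h₁ : ccLe Ar Al Abi p q) (h₂ : ccLe Ar Al Abi q r) : ccLe Ar Al Abi p r := by
  refine ⟨fun u v => ∃ w, ccLe Ar Al Abi u w ∧ ccLe Ar Al Abi w v, ?_, q, h₁, h₂⟩
  rintro u v ⟨w, huw, hwv⟩
  constructor
  · intro c hc u' hs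
    obtain ⟨w', hw, huw'⟩ := huw.step_cov hc hs
    obtain ⟨v', hv, hwv'⟩ := hwv.step_cov hc hw
    exact ⟨v', hv, w', huw', hwv'⟩
  · intro c hc v' hs
    obtain ⟨w', hw, hwv'⟩ := hwv.step_contra hc hs
    obtain ⟨u', hu, huw'⟩ := huw.step_contra hc hw
    exact ⟨u', hu, w', huw', hwv'⟩

theorem pre (c : A) (h : ccLe Ar Al Abi p q) : ccLe Ar Al Abi (.pre c p) (.pre c q) :=
  .of_steps (fun _ _ _ hs => by cases hs; exact ⟨q, .pre c q, h⟩)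
    (fun _ _ _ hs => by cases hs; exact ⟨p, .pre c p, h⟩)

theorem iterate_pre (c : A) (h : ccLe Ar Al Abi p q) (n : ℕ) :
    ccLe Ar Al Abi ((Proc.pre c)^[n] p) ((Proc.pre c)^[n] q) := by
  induction n with
  | zero => exact h
  | succ n ih => simpa only [Function.iterate_succ_apply'] using ih.pre c

theorem add (h₁ : ccLe Ar Al Abi p q) (h₂ : ccLe Ar Al Abi r s) :
    ccLe Ar Al Abi (.add p r) (.add q s) := by
  refine .of_steps (fun c hc _ hs => ?_) (fun c hc _ hs => ?_)
  · cases hs with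
    | addL _ hs => exact (h₁.step_cov hc hs).imp fun _ => And.imp_left (.addL _)
    | addR _ hs => exact (h₂.step_cov hc hs).imp fun _ => And.imp_left (.addR _)
  · cases hs with
    | addL _ hs => exact (h₁.step_contra hc hs).imp fun _ => And.imp_left (.addL _)
    | addR _ hs => exact (h₂.step_contra hc hs).imp fun _ => And.imp_left (.addR _)

theorem add_le (h₁ : ccLe Ar Al Abi p r) (h₂ : ccLe Ar Al Abi q r) :
    ccLe Ar Al Abi (.add p q) r := by
  refine .of_steps (fun c hc _ hs => ?_) (fun c hc _ hs => ?_)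
  · cases hs with
    | addL _ hs => exact h₁.step_cov hc hs
    | addR _ hs => exact h₂.step_cov hc hs
  · exact (h₁.step_contra hc hs).imp fun _ => And.imp_left (.addL _)

theorem le_add (h : ccLe Ar Al Abi p q) (hs : ∀ c ∈ Al ∪ Abi, c ∉ initials s) :
    ccLe Ar Al Abi p (.add q s) := by
  refine .of_steps (fun c hc _ hp => ?_) (fun c hc _ hq => ?_)
  · exact (h.step_cov hc hp).imp fun _ => And.imp_left (.addL _)
  · cases hq with
    | addL _ hq => exact h.step_contra hc hq
    | addR _ hq => exact absurd ⟨_, hq⟩ (hs c hc)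

theorem swap (h : ccLe Ar Al Abi p q) : ccLe Al Ar Abi q p :=
  let ⟨S, hS, hpq⟩ := h
  ⟨fun u v => S v u, fun u v huv => ⟨(hS v u huv).2, (hS v u huv).1⟩, hpq⟩

end ccLe

theorem ccEq.swap {p q : Proc A} (h : ccEq Ar Al Abi p q) : ccEq Al Ar Abi p q :=
  ⟨h.2.swap, h.1.swap⟩

theorem DerivEq.ccEq_of_sound {E : Set (Term A × Term A)}
    (hsound : ∀ e ∈ E, ∀ σ : ℕ → Proc A, ccEq Ar Al Abi (e.1.subst σ) (e.2.subst σ))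
    {p q : Proc A} (h : DerivEq E p q) : ccEq Ar Al Abi p q := by
  induction h with
  | ax l r σ hmem => exact hsound _ hmem σ
  | refl p => exact ⟨.refl p, .refl p⟩
  | symm _ ih => exact ⟨ih.2, ih.1⟩
  | trans _ _ ih₁ ih₂ => exact ⟨ih₁.1.trans ih₂.1, ih₂.2.trans ih₁.2⟩
  | pre c _ ih => exact ⟨ih.1.pre c, ih.2.pre c⟩
  | add _ _ ih₁ ih₂ => exact ⟨ih₁.1.add ih₂.1, ih₁.2.add ih₂.2⟩

inductive TopV (x : ℕ) : Term A → Prop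
  | var : TopV x (.var x)
  | addL {s t : Term A} : TopV x s → TopV x (.add s t)
  | addR {s t : Term A} : TopV x t → TopV x (.add s t)

inductive TopP (c : A) (w : Term A) : Term A → Prop
  | pre : TopP c w (.pre c w)
  | addL {s t : Term A} : TopP c w s → TopP c w (.add s t)
  | addR {s t : Term A} : TopP c w t → TopP c w (.add s t)

def tdepth : Term A → ℕ
  | .var _ => 0
  | .nil => 0
  | .pre _ t => tdepth t + 1
  | .add s t => max (tdepth s) (tdepth t)

theorem tdepth_lt_of_topP {c : A} {w u : Term A} (h : TopP c w u) : tdepth w < tdepth u := by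
  induction h with
  | pre => exact Nat.lt_succ_self _
  | addL _ ih => exact ih.trans_le (le_max_left _ _)
  | addR _ ih => exact ih.trans_le (le_max_right _ _)

theorem step_subst_of_topP {c : A} {w u : Term A} (h : TopP c w u) (σ : ℕ → Proc A) :
    Step (u.subst σ) c (w.subst σ) := by
  induction h with
  | pre => exact .pre c _
  | addL _ ih => exact .addL _ ih
  | addR _ ih => exact .addR _ ih

theorem step_subst_of_topV {σ : ℕ → Proc A} {x : ℕ} {u : Term A} (h : TopV x u) {c : A}
    {d : Proc A} (hs : Step (σ x) c d) : Step (u.subst σ) c d := by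
  induction h with
  | var => exact hs
  | addL _ ih => exact .addL _ ih
  | addR _ ih => exact .addR _ ih

theorem step_subst_cases {σ : ℕ → Proc A} {c : A} {d : Proc A} :
    ∀ {u : Term A}, Step (u.subst σ) c d →
      (∃ w, TopP c w u ∧ d = w.subst σ) ∨ ∃ x, TopV x u ∧ Step (σ x) c d
  | .var x, h => .inr ⟨x, .var, h⟩
  | .nil, h => nomatch h
  | .pre _ t, h => by
      cases h
      exact .inl ⟨t, .pre, rfl⟩
  | .add s t, h => by
      cases h with
      | addL _ h =>
        rcases step_subst_cases h with ⟨w, hw, rfl⟩ | ⟨x, hx, hs⟩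
        exacts [.inl ⟨w, .addL hw, rfl⟩, .inr ⟨x, .addL hx, hs⟩]
      | addR _ h =>
        rcases step_subst_cases h with ⟨w, hw, rfl⟩ | ⟨x, hx, hs⟩
        exacts [.inl ⟨w, .addR hw, rfl⟩, .inr ⟨x, .addR hx, hs⟩]

theorem initials_subst_update_of_not_topV {v : Term A} {x : ℕ} (hx : ¬ TopV x v)
    (σ : ℕ → Proc A) (P : Proc A) :
    initials (v.subst (Function.update σ x P)) = initials (v.subst σ) := by
  ext c
  constructor <;> rintro ⟨d, hd⟩ <;> rcases step_subst_cases hd with ⟨w, hw, -⟩ | ⟨y, hy, hys⟩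
  · exact ⟨_, step_subst_of_topP hw σ⟩
  · rw [Function.update_of_ne (by rintro rfl; exact hx hy)] at hys
    exact ⟨d, step_subst_of_topV hy hys⟩
  · exact ⟨_, step_subst_of_topP hw _⟩
  · refine ⟨d, step_subst_of_topV hy ?_⟩
    rwa [Function.update_of_ne (by rintro rfl; exact hx hy)]

inductive VarAfter (b : A) (x : ℕ) : ℕ → Term A → Prop
  | top {v : Term A} : TopV x v → VarAfter b x 0 v
  | pre {v w : Term A} {k : ℕ} : TopP b w v → VarAfter b x k w → VarAfter b x (k + 1) v

theorem VarAfter.le_tdepth {b : A} {x k : ℕ} {v : Term A} (h : VarAfter b x k v) :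
    k ≤ tdepth v := by
  induction h with
  | top => exact Nat.zero_le _
  | pre hw _ ih => exact Nat.succ_le_of_lt (ih.trans_lt (tdepth_lt_of_topP hw))

def BPath (b : A) : ℕ → Proc A → Proc A → Prop
  | 0, p, q => p = q
  | s + 1, p, q => ∃ r, Step p b r ∧ BPath b s r q

theorem bpath_iterate_pre (b : A) (p : Proc A) (n : ℕ) : BPath b n ((Proc.pre b)^[n] p) p := by
  induction n with
  | zero => rfl
  | succ n ih => rw [Function.iterate_succ_apply']; exact ⟨_, .pre b _, ih⟩

theorem VarAfter.bpath_subst {b : A} {x k i : ℕ} {v : Term A} (hx : VarAfter b x k v)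
    {σ : ℕ → Proc A} {h : Proc A} (hp : BPath b (i + 1) (σ x) h) :
    BPath b (i + 1 + k) (v.subst σ) h := by
  induction hx with
  | top hv =>
    obtain ⟨r, hr, hp⟩ := hp
    exact ⟨r, step_subst_of_topV hv hr, hp⟩
  | pre hw _ ih => exact ⟨_, step_subst_of_topP hw σ, ih⟩

/-- A `b`-path from `σ(w)` either stays inside the syntax of `w` or leaves it through a variable. -/
theorem bpath_subst_cases {b : A} {σ : ℕ → Proc A} :
    ∀ {s : ℕ} {w : Term A} {h : Proc A}, BPath b s (w.subst σ) h →
      s ≤ tdepth w ∨ ∃ x k i, VarAfter b x k w ∧ i + 1 + k = s ∧ BPath b (i + 1) (σ x) h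
  | 0, _, _, _ => .inl (Nat.zero_le _)
  | s + 1, w, h, ⟨r, hr, hp⟩ => by
      rcases step_subst_cases hr with ⟨w₁, hw₁, rfl⟩ | ⟨x, hx, hxr⟩
      · rcases bpath_subst_cases hp with hs | ⟨x, k, i, hxk, rfl, hpx⟩
        · exact .inl (Nat.succ_le_of_lt (hs.trans_lt (tdepth_lt_of_topP hw₁)))
        · exact .inr ⟨x, k + 1, i, .pre hw₁ hxk, rfl, hpx⟩
      · exact .inr ⟨x, 0, s, .top hx, rfl, r, hxr, hp⟩

theorem bpath_subst_le_tdepth {b : A} {σ : ℕ → Proc A} (hσ : ∀ y, b ∉ initials (σ y))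
    {s : ℕ} {w : Term A} {h : Proc A} (hp : BPath b s (w.subst σ) h) : s ≤ tdepth w := by
  rcases bpath_subst_cases hp with hs | ⟨x, -, -, -, -, r, hr, -⟩
  exacts [hs, absurd ⟨r, hr⟩ (hσ x)]

namespace ccLe

variable {b : A}

theorem bpath_cov (hb : b ∈ Ar ∪ Abi) {s : ℕ} {g e h : Proc A} (hge : ccLe Ar Al Abi g e)
    (hp : BPath b s g h) : ∃ e', BPath b s e e' ∧ ccLe Ar Al Abi h e' := by
  induction s generalizing g e with
  | zero =>
    obtain rfl : g = h := hp
    exact ⟨e, rfl, hge⟩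
  | succ s ih =>
    obtain ⟨r, hr, hp⟩ := hp
    obtain ⟨e₁, he₁, hre₁⟩ := hge.step_cov hb hr
    obtain ⟨e', hp', hhe'⟩ := ih hre₁ hp
    exact ⟨e', ⟨e₁, he₁, hp'⟩, hhe'⟩

theorem bpath_contra (hb : b ∈ Al ∪ Abi) {s : ℕ} {g e h : Proc A} (hge : ccLe Ar Al Abi g e)
    (hp : BPath b s e h) : ∃ g', BPath b s g g' ∧ ccLe Ar Al Abi g' h := by
  induction s generalizing g e with
  | zero =>
    obtain rfl : e = h := hp
    exact ⟨g, rfl, hge⟩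
  | succ s ih =>
    obtain ⟨r, hr, hp⟩ := hp
    obtain ⟨g₁, hg₁, hg₁r⟩ := hge.step_contra hb hr
    obtain ⟨g', hp', hg'h⟩ := ih hg₁r hp
    exact ⟨g', ⟨g₁, hg₁, hp'⟩, hg'h⟩

end ccLe

/-- As far as `b`-paths, bivariant actions and the final offer of `a` are concerned, `d` behaves
like `bᵐ.a.0`. -/
def Ladder (Abi : Set A) (a b : A) : ℕ → Proc A → Prop
  | 0, d => (∀ c ∈ Abi, c ∉ initials d) ∧ a ∈ initials d
  | m + 1, d => b ∈ initials d ∧ (∀ c ∈ Abi, c ∈ initials d → c = b) ∧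
      ∀ d', Step d b d' → Ladder Abi a b m d'

namespace Ladder

variable {a b : A}

theorem bpath {m s : ℕ} {g h : Proc A} (hg : Ladder Abi a b (m + s) g) (hp : BPath b s g h) :
    Ladder Abi a b m h := by
  induction s generalizing g with
  | zero =>
    obtain rfl : g = h := hp
    exact hg
  | succ s ih =>
    obtain ⟨r, hr, hp⟩ := hp
    exact ih (hg.2.2 r hr) hp

theorem bpath_length_le (hb : b ∈ Abi) {m s : ℕ} {g h : Proc A} (hg : Ladder Abi a b m g)
    (hp : BPath b s g h) : s ≤ m := by
  induction s generalizing g m with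
  | zero => exact Nat.zero_le _
  | succ s ih =>
    obtain ⟨r, hr, hp⟩ := hp
    cases m with
    | zero => exact absurd ⟨r, hr⟩ (hg.1 b hb)
    | succ m => exact Nat.succ_le_succ (ih (hg.2.2 r hr) hp)

theorem iterate_pre_iff {m : ℕ} {p : Proc A} :
    Ladder Abi a b m ((Proc.pre b)^[m] p) ↔ Ladder Abi a b 0 p := by
  induction m with
  | zero => rfl
  | succ m ih =>
    rw [Function.iterate_succ_apply', ← ih]
    refine ⟨fun h => h.2.2 _ (.pre b _), fun h => ⟨⟨_, .pre b _⟩, ?_, ?_⟩⟩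
    · exact fun c _ hc => mem_initials_pre.1 hc
    · intro d' hd'
      cases hd'
      exact h

theorem of_ccLe (hb : b ∈ Abi) {m : ℕ} {g e : Proc A} (hge : ccLe Ar Al Abi g e)
    (he : Ladder Abi a b m e) (hend : ∀ h, BPath b m g h → a ∈ initials h) :
    Ladder Abi a b m g := by
  induction m generalizing g e with
  | zero =>
    exact ⟨fun c hc hcg => he.1 c hc (hge.mem_initials_cov (.inr hc) hcg), hend g rfl⟩
  | succ m ih =>
    refine ⟨hge.mem_initials_contra (.inr hb) he.1,
      fun c hc hcg => he.2.1 c hc (hge.mem_initials_cov (.inr hc) hcg), fun g' hg' => ?_⟩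
    obtain ⟨e', he', hge'⟩ := hge.step_cov (.inr hb) hg'
    exact ih hge' (he.2.2 e' he') fun h hp => hend h ⟨g', hg', hp⟩

theorem of_ccEq (haR : a ∈ Ar ∪ Abi) (hb : b ∈ Abi) {m : ℕ} {g d : Proc A}
    (hgd : ccLe Ar Al Abi g d) (hdg : ccLe Ar Al Abi d g) (hd : Ladder Abi a b m d) :
    Ladder Abi a b m g := by
  refine hd.of_ccLe hb hgd fun h hp => ?_
  obtain ⟨d', hpd, hd'h⟩ := hdg.bpath_contra (.inr hb) hp
  exact hd'h.mem_initials_cov haR (Ladder.bpath (m := 0) (by rwa [zero_add]) hpd).2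

theorem not_of_bpath_nil (hb : b ∈ Abi) {m s : ℕ} {g e : Proc A} (hge : ccLe Ar Al Abi g e)
    (hp : BPath b s g .nil) (hs : s < m) : ¬ Ladder Abi a b m e := by
  intro he
  obtain ⟨e', hpe, hnil⟩ := hge.bpath_cov (.inr hb) hp
  obtain ⟨k, rfl⟩ : ∃ k, m = k + 1 + s := ⟨m - s - 1, by omega⟩
  exact notMem_initials_nil b (hnil.mem_initials_contra (.inr hb) (he.bpath hpe).1)

theorem subst_update {σ : ℕ → Proc A} {x : ℕ} (P : Proc A) :
    ∀ {m : ℕ} {v : Term A}, (∀ k ≤ m, ¬ VarAfter b x k v) → Ladder Abi a b m (v.subst σ) →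
      Ladder Abi a b m (v.subst (Function.update σ x P))
  | 0, v, hreach, hv => by
    have hx : ¬ TopV x v := fun hx => hreach 0 le_rfl (.top hx)
    simpa only [Ladder, initials_subst_update_of_not_topV hx] using hv
  | m + 1, v, hreach, hv => by
    have hx : ¬ TopV x v := fun hx => hreach 0 (Nat.zero_le _) (.top hx)
    have hI := initials_subst_update_of_not_topV hx σ P
    refine ⟨hI ▸ hv.1, hI ▸ hv.2.1, fun d hd => ?_⟩
    rcases step_subst_cases hd with ⟨w, hw, rfl⟩ | ⟨y, hy, hys⟩
    · exact subst_update P (fun k hk hxk => hreach (k + 1) (by omega) (.pre hw hxk))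
        (hv.2.2 _ (step_subst_of_topP hw σ))
    · rw [Function.update_of_ne (by rintro rfl; exact hx hy)] at hys
      exact hv.2.2 _ (step_subst_of_topV hy hys)

end Ladder

def DerivsLadder (Abi : Set A) (a b : A) (n : ℕ) (p : Proc A) : Prop :=
  ∀ d, Step p a d → Ladder Abi a b n d

section DerivsLadder

variable {a b : A} {n : ℕ}

theorem derivsLadder_pre {c : A} {p : Proc A} :
    DerivsLadder Abi a b n (.pre c p) ↔ (c = a → Ladder Abi a b n p) := by
  refine ⟨fun h hca => h p (hca ▸ .pre c p), fun h d hd => ?_⟩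
  cases hd
  exact h rfl

theorem derivsLadder_add {p q : Proc A} :
    DerivsLadder Abi a b n (.add p q) ↔ DerivsLadder Abi a b n p ∧ DerivsLadder Abi a b n q := by
  refine ⟨fun h => ⟨fun d hd => h d (.addL q hd), fun d hd => h d (.addR p hd)⟩, fun h d hd => ?_⟩
  cases hd with
  | addL _ hd => exact h.1 d hd
  | addR _ hd => exact h.2 d hd

variable {t u : Term A}

theorem topV_of_forall_ccLe_subst (haR : a ∈ Ar ∪ Abi) (hbR : b ∈ Ar ∪ Abi) (hab : a ≠ b)
    (hle : ∀ σ, ccLe Ar Al Abi (u.subst σ) (t.subst σ)) {x : ℕ} (hx : TopV x u) : TopV x t := by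
  let σ : ℕ → Proc A := Function.update (fun _ => .nil) x (.pre a ((Proc.pre b)^[tdepth t] .nil))
  have hσ : ∀ y, b ∉ initials (σ y) := by
    intro y
    by_cases hyx : y = x
    · simpa [σ, hyx, mem_initials_pre] using hab.symm
    · simpa [σ, hyx] using notMem_initials_nil b
  obtain ⟨e, he, hce⟩ := (hle σ).step_cov haR
    (step_subst_of_topV hx (by simpa [σ] using Step.pre a _))
  obtain ⟨e', hpe, -⟩ := hce.bpath_cov hbR (bpath_iterate_pre b .nil (tdepth t))
  rcases step_subst_cases he with ⟨v, hv, rfl⟩ | ⟨y, hy, hys⟩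
  · exact absurd (bpath_subst_le_tdepth hσ hpe) (tdepth_lt_of_topP hv).not_ge
  · by_cases hyx : y = x
    · exact hyx ▸ hy
    · simp only [σ, Function.update_of_ne hyx] at hys
      cases hys

theorem mem_initials_of_bpath_subst (haR : a ∈ Ar ∪ Abi) (hb : b ∈ Abi) (hab : a ≠ b)
    (hle : ∀ σ, ccLe Ar Al Abi (u.subst σ) (t.subst σ)) {w : Term A} (hw : TopP a w u)
    (hn : tdepth u < n) {σ : ℕ → Proc A} (ht : DerivsLadder Abi a b n (t.subst σ))
    {h : Proc A} (hp : BPath b n (w.subst σ) h) (hhb : b ∉ initials h) : a ∈ initials h := by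
  rcases bpath_subst_cases hp with hnw | ⟨x, j, i, hxj, rfl, hpx⟩
  · have := tdepth_lt_of_topP hw
    omega
  let σ' := Function.update σ x (.pre b .nil)
  obtain ⟨e', he', hwe'⟩ := (hle σ').step_cov haR (step_subst_of_topP hw σ')
  have hdead : BPath b (0 + 1 + j) (w.subst σ') .nil :=
    hxj.bpath_subst ⟨.nil, by simpa [σ'] using Step.pre b .nil, rfl⟩
  have he'L : ¬ Ladder Abi a b (i + 1 + j) e' := Ladder.not_of_bpath_nil hb hwe' hdead
    (by have := hxj.le_tdepth; have := tdepth_lt_of_topP hw; omega)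
  obtain ⟨v, hv, rfl⟩ : ∃ v, TopP a v t ∧ e' = v.subst σ' := by
    rcases step_subst_cases he' with hv | ⟨y, hy, hys⟩
    · exact hv
    by_cases hyx : y = x
    · simp only [σ', hyx, Function.update_self] at hys
      cases hys
      exact absurd rfl hab
    · simp only [σ', Function.update_of_ne hyx] at hys
      exact absurd (ht _ (step_subst_of_topV hy hys)) he'L
  have hv : Ladder Abi a b (i + 1 + j) (v.subst σ) := ht _ (step_subst_of_topP hv σ)
  obtain ⟨k, -, hxk⟩ : ∃ k ≤ i + 1 + j, VarAfter b x k v := by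
    by_contra! hreach
    exact he'L (hv.subst_update _ hreach)
  have hph := hxk.bpath_subst hpx
  obtain ⟨r, hr⟩ : ∃ r, i + 1 + j = r + (i + 1 + k) := ⟨_, (Nat.sub_add_cancel
    (hv.bpath_length_le hb hph)).symm⟩
  rw [hr] at hv
  cases r with
  | zero => exact (hv.bpath hph).2
  | succ r => exact absurd (hv.bpath hph).1 hhb

theorem ladder_subst_of_topP (haR : a ∈ Ar ∪ Abi) (hb : b ∈ Abi) (hab : a ≠ b)
    (hle : ∀ σ, ccLe Ar Al Abi (u.subst σ) (t.subst σ)) {w : Term A} (hw : TopP a w u)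
    (hn : tdepth u < n) {σ : ℕ → Proc A} (ht : DerivsLadder Abi a b n (t.subst σ)) :
    Ladder Abi a b n (w.subst σ) := by
  obtain ⟨e, he, hwe⟩ := (hle σ).step_cov haR (step_subst_of_topP hw σ)
  have heL := ht e he
  refine heL.of_ccLe hb hwe fun h hp =>
    mem_initials_of_bpath_subst haR hb hab hle hw hn ht hp fun hbh => ?_
  obtain ⟨e', hpe, hhe'⟩ := hwe.bpath_cov (.inr hb) hp
  exact (Ladder.bpath (m := 0) (by rwa [zero_add]) hpe).1 b hb (hhe'.mem_initials_cov (.inr hb) hbh)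

theorem derivsLadder_subst_of_forall_ccLe (haR : a ∈ Ar ∪ Abi) (hb : b ∈ Abi) (hab : a ≠ b)
    (hle : ∀ σ, ccLe Ar Al Abi (u.subst σ) (t.subst σ)) (hn : tdepth u < n) (σ : ℕ → Proc A)
    (ht : DerivsLadder Abi a b n (t.subst σ)) : DerivsLadder Abi a b n (u.subst σ) := by
  intro d hd
  rcases step_subst_cases hd with ⟨w, hw, rfl⟩ | ⟨x, hx, hxd⟩
  · exact ladder_subst_of_topP haR hb hab hle hw hn ht
  · exact ht d (step_subst_of_topV (topV_of_forall_ccLe_subst haR (.inr hb) hab hle hx) hxd)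

theorem DerivEq.derivsLadder_iff (haR : a ∈ Ar ∪ Abi) (hb : b ∈ Abi) (hab : a ≠ b)
    {E : Set (Term A × Term A)}
    (hsound : ∀ e ∈ E, ∀ σ : ℕ → Proc A, ccEq Ar Al Abi (e.1.subst σ) (e.2.subst σ))
    (hdepth : ∀ e ∈ E, tdepth e.1 < n ∧ tdepth e.2 < n) {p q : Proc A} (h : DerivEq E p q) :
    DerivsLadder Abi a b n p ↔ DerivsLadder Abi a b n q := by
  induction h with
  | ax l r σ hmem =>
    exact ⟨derivsLadder_subst_of_forall_ccLe haR hb hab (fun σ => (hsound _ hmem σ).2)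
        (hdepth _ hmem).2 σ,
      derivsLadder_subst_of_forall_ccLe haR hb hab (fun σ => (hsound _ hmem σ).1)
        (hdepth _ hmem).1 σ⟩
  | refl => exact .rfl
  | symm _ ih => exact ih.symm
  | trans _ _ ih₁ ih₂ => exact ih₁.trans ih₂
  | pre c h _ =>
    have hpq := h.ccEq_of_sound hsound
    simp only [derivsLadder_pre]
    exact imp_congr_right fun _ =>
      ⟨Ladder.of_ccEq haR hb hpq.2 hpq.1, Ladder.of_ccEq haR hb hpq.1 hpq.2⟩
  | add _ _ ih₁ ih₂ => simp only [derivsLadder_add, ih₁, ih₂]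

end DerivsLadder

theorem exists_tdepth_lt {E : Set (Term A × Term A)} (hfin : E.Finite) :
    ∃ n, ∀ e ∈ E, tdepth e.1 < n ∧ tdepth e.2 < n := by
  obtain ⟨N, hN⟩ := (hfin.image fun e => max (tdepth e.1) (tdepth e.2)).bddAbove
  exact ⟨N + 1, fun e he => by have := hN (Set.mem_image_of_mem _ he); omega⟩

theorem exists_ccEq_not_derivEq {a b : A} (ha : a ∈ Ar) (haAl : a ∉ Al) (haAbi : a ∉ Abi)
    (hb : b ∈ Abi) {E : Set (Term A × Term A)} (hfin : E.Finite)
    (hsound : ∀ e ∈ E, ∀ σ : ℕ → Proc A, ccEq Ar Al Abi (e.1.subst σ) (e.2.subst σ)) :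
    ∃ p q : Proc A, ccEq Ar Al Abi p q ∧ ¬ DerivEq E p q := by
  obtain ⟨n, hn⟩ := exists_tdepth_lt hfin
  have hab : a ≠ b := by rintro rfl; exact haAbi hb
  have ha_cov_only : ∀ c ∈ Al ∪ Abi, c ≠ a := by rintro c (hc | hc) rfl <;> contradiction
  set good := (Proc.pre b)^[n] (.pre a .nil)
  set bad := (Proc.pre b)^[n] (.nil : Proc A)
  have hnil : ccLe Ar Al Abi .nil (.pre a .nil) :=
    .of_steps (fun _ _ _ hs => nomatch hs) fun _ hc _ hs => by cases hs; cases ha_cov_only _ hc rfl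
  have hbad : ccLe Ar Al Abi bad good := hnil.iterate_pre b n
  refine ⟨.pre a good, .add (.pre a good) (.pre a bad), ⟨?_, ?_⟩, fun hder => ?_⟩
  · exact (ccLe.refl _).le_add fun c hc hca => ha_cov_only c hc (mem_initials_pre.1 hca)
  · exact (ccLe.refl _).add_le (hbad.pre a)
  have hgood : DerivsLadder Abi a b n (.pre a good) := derivsLadder_pre.2 fun _ =>
    Ladder.iterate_pre_iff.2 ⟨fun c hc hca => haAbi (mem_initials_pre.1 hca ▸ hc), ⟨_, .pre a _⟩⟩
  have hq := (hder.derivsLadder_iff (.inl ha) hb hab hsound hn).1 hgood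
  rw [derivsLadder_add, derivsLadder_pre, derivsLadder_pre] at hq
  exact notMem_initials_nil a (Ladder.iterate_pre_iff.1 (hq.2 rfl)).2

/-- If `A^bi ≠ ∅` and `A^r ∪ A^l ≠ ∅`, then covariant-contravariant simulation
equivalence is not finitely axiomatizable: for every finite set `E` of
equations between open terms that is sound for `≡_CC`, there are processes
`p ≡_CC q` whose equation is not derivable from `E`. -/
theorem cc_eq_not_finitely_axiomatizable {A : Type} (Ar Al Abi : Set A)
    (hpart : IsPartition Ar Al Abi)
    (hbi : Abi.Nonempty) (hrl : (Ar ∪ Al).Nonempty)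
    (E : Set (Term A × Term A)) (hfin : E.Finite)
    (hsound : ∀ e ∈ E, ∀ σ : ℕ → Proc A, ccEq Ar Al Abi (e.1.subst σ) (e.2.subst σ)) :
    ∃ p q : Proc A, ccEq Ar Al Abi p q ∧ ¬ DerivEq E p q := by
  obtain ⟨-, hrl_disj, hr_bi_disj, hl_bi_disj⟩ := hpart
  obtain ⟨b, hb⟩ := hbi
  obtain ⟨a, ha | ha⟩ := hrl
  · exact exists_ccEq_not_derivEq ha (Set.disjoint_left.mp hrl_disj ha)
      (Set.disjoint_left.mp hr_bi_disj ha) hb hfin hsound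
  · obtain ⟨p, q, hpq, hnot⟩ := exists_ccEq_not_derivEq (Ar := Al) (Al := Ar) ha
      (Set.disjoint_right.mp hrl_disj ha) (Set.disjoint_left.mp hl_bi_disj ha) hb hfin
      fun e he σ => (hsound e he σ).swap
    exact ⟨p, q, hpq.swap, hnot⟩
end

section
/- For all closed BCCSP processes p, q: p ≲_RCS q if and only if q ≲_RS p. Consequently, p ≲_RCS q and q ≲_RCS p hold iff p ≲_RS q and q ≲_RS p hold, and q ≲_RS p implies p ≲_CS q. -/
/-! Once `I(p) = I(q)`, the side condition `a ∈ I(p)` of the conformance clause always holds,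
so that clause is the ready-simulation transfer clause read backwards: ready conformance
simulations are exactly the converses of ready simulations. -/

theorem IsRCSim.isRSim_flip {A : Type} {R : Proc A → Proc A → Prop} (hR : IsRCSim R) :
    IsRSim (flip R) := by
  intro x y hyx
  obtain ⟨hconf, hready⟩ := hR
  have hI : initials y = initials x := (hconf y x hyx).1.antisymm (hready y x hyx)
  refine ⟨hI.symm, fun a x' hx => ?_⟩
  exact (hconf y x hyx).2 a x' hx (hI ▸ ⟨x', hx⟩)

theorem IsRSim.isRCSim_flip {A : Type} {S : Proc A → Proc A → Prop} (hS : IsRSim S) :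
    IsRCSim (flip S) :=
  ⟨fun x y hyx => ⟨(hS y x hyx).1.symm.subset, fun a y' hy _ => (hS y x hyx).2 a y' hy⟩,
    fun x y hyx => (hS y x hyx).1.subset⟩

theorem rcsLe_iff_rsLe {A : Type} {p q : Proc A} : rcsLe p q ↔ rsLe q p :=
  ⟨fun ⟨R, hR, hpq⟩ => ⟨flip R, hR.isRSim_flip, hpq⟩,
    fun ⟨S, hS, hqp⟩ => ⟨flip S, hS.isRCSim_flip, hqp⟩⟩

theorem rcsLe.csLe {A : Type} {p q : Proc A} (h : rcsLe p q) : csLe p q :=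
  let ⟨R, hR, hpq⟩ := h
  ⟨R, hR.1, hpq⟩

/-- `≲_RCS` is the inverse of `≲_RS`; hence `≡_RCS` and `≡_RS` coincide and
`≲_RS⁻¹ ⊆ ≲_CS`. -/
theorem rcs_eq_inv_rs {A : Type} (p q : Proc A) :
    (rcsLe p q ↔ rsLe q p) ∧
    ((rcsLe p q ∧ rcsLe q p) ↔ (rsLe p q ∧ rsLe q p)) ∧
    (rsLe q p → csLe p q) := by
  refine ⟨rcsLe_iff_rsLe, ?_, fun h => (rcsLe_iff_rsLe.mpr h).csLe⟩
  rw [rcsLe_iff_rsLe, rcsLe_iff_rsLe, and_comm]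
end
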